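/- If Q is degraded with respect to W, then the Bhattacharyya parameter satisfies Z(Q) ≥ Z(W), where Z(W) = Σ_y √(W(y|0)·W(y|1)). -/

import Mathlib

/-!
Write `Q x z = ∑ y, W x y * P y z` with a channel `P`. Since the rows of `P` sum to one,
`Z(W) = ∑ z ∑ y √(W 0 y · W 1 y) · P y z`, and for each output `z` the inner sum is
`∑ y √(W 0 y · P y z) · √(W 1 y · P y z) ≤ √(Q 0 z · Q 1 z)` by Cauchy–Schwarz.
-/

open scoped BigOperators

open Finset

/-- `P : A → B → ℝ` is a channel: nonnegative entries, rows sum to 1. -/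
def IsChannel {A B : Type*} [Fintype B] (P : A → B → ℝ) : Prop :=
  (∀ a b, 0 ≤ P a b) ∧ ∀ a, ∑ b, P a b = 1

/-- `Q` is degraded with respect to `W`. -/
def DegradedWrt {A B : Type*} [Fintype A] [Fintype B]
    (Q : Bool → B → ℝ) (W : Bool → A → ℝ) : Prop :=
  ∃ P : A → B → ℝ, IsChannel P ∧ ∀ x b, Q x b = ∑ a, W x a * P a b

lemma sum_sqrt_mul_mul_le_sqrt_mul {ι : Type*} (s : Finset ι) {f g p : ι → ℝ}
    (hf : ∀ i, 0 ≤ f i) (hg : ∀ i, 0 ≤ g i) (hp : ∀ i, 0 ≤ p i) :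
    ∑ i ∈ s, √(f i * g i) * p i ≤ √((∑ i ∈ s, f i * p i) * ∑ i ∈ s, g i * p i) := by
  have hfp i : 0 ≤ f i * p i := mul_nonneg (hf i) (hp i)
  have hgp i : 0 ≤ g i * p i := mul_nonneg (hg i) (hp i)
  calc ∑ i ∈ s, √(f i * g i) * p i = ∑ i ∈ s, √(f i * p i) * √(g i * p i) := by
        refine sum_congr rfl fun i _ => ?_
        rw [← Real.sqrt_mul (hfp i), show f i * p i * (g i * p i) = f i * g i * p i ^ 2 by ring,
          Real.sqrt_mul (mul_nonneg (hf i) (hg i)), Real.sqrt_sq (hp i)]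
    _ ≤ √(∑ i ∈ s, f i * p i) * √(∑ i ∈ s, g i * p i) := Real.sum_sqrt_mul_sqrt_le s hfp hgp
    _ = √((∑ i ∈ s, f i * p i) * ∑ i ∈ s, g i * p i) :=
        (Real.sqrt_mul (sum_nonneg fun i _ => hfp i) _).symm

theorem bhattacharyya_le_of_degraded {Y Z : Type*} [Fintype Y] [Fintype Z]
    (W : Bool → Y → ℝ) (Q : Bool → Z → ℝ)
    (hW : ∀ x y, 0 ≤ W x y) (hdeg : DegradedWrt Q W) :
    ∑ z, Real.sqrt (Q false z * Q true z) ≥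
      ∑ y, Real.sqrt (W false y * W true y) := by
  obtain ⟨P, ⟨hP_nonneg, hP_sum⟩, hQ⟩ := hdeg
  calc ∑ y, √(W false y * W true y)
      = ∑ y, √(W false y * W true y) * ∑ z, P y z := by simp only [hP_sum, mul_one]
    _ = ∑ z, ∑ y, √(W false y * W true y) * P y z := by simp_rw [mul_sum]; exact sum_comm
    _ ≤ ∑ z, √(Q false z * Q true z) := sum_le_sum fun z _ => by
        simpa only [hQ] using
          sum_sqrt_mul_mul_le_sqrt_mul univ (hW false) (hW true) (hP_nonneg · z)
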